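/- arXiv:1312.3059 — 2 statements merged into one kernel-verified Lean document; each statement's English description precedes it below -/
import Mathlib

section
/- Let Γ be a finite set of Harrop formulas. If the sequent Γ ⇒ α₀ ∨ α₁ is derivable in intuitionistic propositional logic, then Γ ⇒ α₀ is derivable or Γ ⇒ α₁ is derivable. -/
/-- Propositional formulas over `⊥, ∨, ∧, ⊃` with variables. -/
inductive Fml : Type
  | var : ℕ → Fml
  | bot : Fml
  | and : Fml → Fml → Fml
  | or : Fml → Fml → Fml
  | imp : Fml → Fml → Fml
  deriving DecidableEq

abbrev Cedent := Finset Fml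
abbrev Sequent := Cedent × Fml

/-- Natural deduction derivations for intuitionistic propositional logic (NJp),
with sequents `Γ ⇒ α`, axioms `α, Γ ⇒ α` and `⊥, Γ ⇒ p` for atoms `p`. -/
inductive NJ : Cedent → Fml → Type
  | ax {Γ α} : α ∈ Γ → NJ Γ α
  | botE {Γ p} : Fml.bot ∈ Γ → NJ Γ (Fml.var p)
  | andI {Γ α β} : NJ Γ α → NJ Γ β → NJ Γ (Fml.and α β)
  | andE₀ {Γ α β} : NJ Γ (Fml.and α β) → NJ Γ α
  | andE₁ {Γ α β} : NJ Γ (Fml.and α β) → NJ Γ β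
  | orI₀ {Γ α β} : NJ Γ α → NJ Γ (Fml.or α β)
  | orI₁ {Γ α β} : NJ Γ β → NJ Γ (Fml.or α β)
  | orE {Γ α β γ} : NJ Γ (Fml.or α β) → NJ (insert α Γ) γ → NJ (insert β Γ) γ → NJ Γ γ
  | impI {Γ α β} : NJ (insert α Γ) β → NJ Γ (Fml.imp α β)
  | impE {Γ α β} : NJ Γ (Fml.imp α β) → NJ Γ α → NJ Γ β

/-- Intuitionistic derivability of a sequent. -/
def Derivable (Γ : Cedent) (α : Fml) : Prop := Nonempty (NJ Γ α)

/-- Harrop formulas: no strictly positive occurrence of `∨`. -/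
def Harrop : Fml → Prop
  | .var _ => True
  | .bot => True
  | .and α β => Harrop α ∧ Harrop β
  | .or _ _ => False
  | .imp _ β => Harrop β

/-- A Harrop cedent: all of its formulas are Harrop. -/
def HarropCed (Γ : Cedent) : Prop := ∀ γ ∈ Γ, Harrop γ

def NJ.wk : ∀ {Γ Γ' : Cedent} {φ : Fml}, NJ Γ φ → Γ ⊆ Γ' → NJ Γ' φ
  | _, _, _, .ax h, s => .ax (s h)
  | _, _, _, .botE h, s => .botE (s h)
  | _, _, _, .andI d e, s => .andI (d.wk s) (e.wk s)
  | _, _, _, .andE₀ d, s => .andE₀ (d.wk s)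
  | _, _, _, .andE₁ d, s => .andE₁ (d.wk s)
  | _, _, _, .orI₀ d, s => .orI₀ (d.wk s)
  | _, _, _, .orI₁ d, s => .orI₁ (d.wk s)
  | _, _, _, .orE d e f, s =>
      .orE (d.wk s) (e.wk (Finset.insert_subset_insert _ s)) (f.wk (Finset.insert_subset_insert _ s))
  | _, _, _, .impI d, s => .impI (d.wk (Finset.insert_subset_insert _ s))
  | _, _, _, .impE d e, s => .impE (d.wk s) (e.wk s)

theorem NJ.cut : ∀ {Δ : Cedent} {φ : Fml}, NJ Δ φ → ∀ {Γ : Cedent},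
    (∀ δ ∈ Δ, Derivable Γ δ) → Derivable Γ φ
  | _, _, .ax h, _, H => H _ h
  | _, _, .botE (p := p) h, Γ, H => by
      obtain ⟨d⟩ := H _ h
      exact ⟨NJ.impE (.impI (.botE (Finset.mem_insert_self _ _))) d⟩
  | _, _, .andI d e, _, H => by
      obtain ⟨d'⟩ := d.cut H; obtain ⟨e'⟩ := e.cut H; exact ⟨.andI d' e'⟩
  | _, _, .andE₀ d, _, H => by obtain ⟨d'⟩ := d.cut H; exact ⟨.andE₀ d'⟩
  | _, _, .andE₁ d, _, H => by obtain ⟨d'⟩ := d.cut H; exact ⟨.andE₁ d'⟩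
  | _, _, .orI₀ d, _, H => by obtain ⟨d'⟩ := d.cut H; exact ⟨.orI₀ d'⟩
  | _, _, .orI₁ d, _, H => by obtain ⟨d'⟩ := d.cut H; exact ⟨.orI₁ d'⟩
  | _, _, .orE (α := α) (β := β) d e f, Γ, H => by
      obtain ⟨d'⟩ := d.cut H
      have H' : ∀ (χ : Fml) {Δ : Cedent}, (∀ δ ∈ Δ, Derivable Γ δ) →
          ∀ δ ∈ insert χ Δ, Derivable (insert χ Γ) δ := by
        intro χ Δ H δ hδ
        rcases Finset.mem_insert.1 hδ with h | h
        · exact ⟨.ax (h ▸ Finset.mem_insert_self _ _)⟩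
        · obtain ⟨d⟩ := H _ h
          exact ⟨d.wk (Finset.subset_insert _ _)⟩
      obtain ⟨e'⟩ := e.cut (H' α H)
      obtain ⟨f'⟩ := f.cut (H' β H)
      exact ⟨.orE d' e' f'⟩
  | Δ, _, .impI (α := α) d, Γ, H => by
      have H' : ∀ δ ∈ insert α Δ, Derivable (insert α Γ) δ := by
        intro δ hδ
        rcases Finset.mem_insert.1 hδ with h | h
        · exact ⟨.ax (h ▸ Finset.mem_insert_self _ _)⟩
        · obtain ⟨d⟩ := H _ h
          exact ⟨d.wk (Finset.subset_insert _ _)⟩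
      obtain ⟨d'⟩ := d.cut H'
      exact ⟨.impI d'⟩
  | _, _, .impE d e, _, H => by
      obtain ⟨d'⟩ := d.cut H; obtain ⟨e'⟩ := e.cut H; exact ⟨.impE d' e'⟩

/-- Aczel/Kleene slash relative to Γ. -/
def Slash (Γ : Cedent) : Fml → Prop
  | .var p => Derivable Γ (.var p)
  | .bot => Derivable Γ .bot
  | .and α β => Slash Γ α ∧ Slash Γ β
  | .or α β => Slash Γ α ∨ Slash Γ β
  | .imp α β => Derivable Γ (.imp α β) ∧ (Slash Γ α → Slash Γ β)

theorem slash_derivable {Γ : Cedent} : ∀ {φ : Fml}, Slash Γ φ → Derivable Γ φ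
  | .var _, h => h
  | .bot, h => h
  | .and _ _, ⟨h₁, h₂⟩ => by
      obtain ⟨d⟩ := slash_derivable h₁; obtain ⟨e⟩ := slash_derivable h₂
      exact ⟨.andI d e⟩
  | .or _ _, .inl h => by obtain ⟨d⟩ := slash_derivable h; exact ⟨.orI₀ d⟩
  | .or _ _, .inr h => by obtain ⟨d⟩ := slash_derivable h; exact ⟨.orI₁ d⟩
  | .imp _ _, ⟨h, _⟩ => h

theorem slash_sound {Γ : Cedent} : ∀ {Δ : Cedent} {φ : Fml}, NJ Δ φ →
    (∀ δ ∈ Δ, Slash Γ δ) → Slash Γ φ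
  | _, _, .ax h, H => H _ h
  | _, _, .botE h, H => by
      have hb : Derivable Γ .bot := H _ h
      obtain ⟨d⟩ := hb
      exact ⟨NJ.impE (.impI (.botE (Finset.mem_insert_self _ _))) d⟩
  | _, _, .andI d e, H => ⟨slash_sound d H, slash_sound e H⟩
  | _, _, .andE₀ d, H => (slash_sound d H).1
  | _, _, .andE₁ d, H => (slash_sound d H).2
  | _, _, .orI₀ d, H => .inl (slash_sound d H)
  | _, _, .orI₁ d, H => .inr (slash_sound d H)
  | _, _, .orE d e f, H => by
      have H' : ∀ (χ : Fml) {Δ : Cedent}, Slash Γ χ → (∀ δ ∈ Δ, Slash Γ δ) →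
          ∀ δ ∈ insert χ Δ, Slash Γ δ := by
        intro χ Δ hχ H δ hδ
        rcases Finset.mem_insert.1 hδ with h | h
        · exact h ▸ hχ
        · exact H _ h
      rcases slash_sound d H with h | h
      · exact slash_sound e (H' _ h H)
      · exact slash_sound f (H' _ h H)
  | Δ, _, .impI (α := α) (β := β) d, H => by
      refine ⟨?_, fun hα => ?_⟩
      · refine NJ.cut (.impI d) (fun δ hδ => slash_derivable (H _ hδ))
      · refine slash_sound d (fun δ hδ => ?_)
        rcases Finset.mem_insert.1 hδ with h | h
        · exact h ▸ hα
        · exact H _ h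
  | _, _, .impE d e, H => (slash_sound d H).2 (slash_sound e H)

theorem harrop_slash {Γ : Cedent} : ∀ {φ : Fml}, Harrop φ → Derivable Γ φ → Slash Γ φ
  | .var _, _, h => h
  | .bot, _, h => h
  | .and _ _, ⟨h₁, h₂⟩, ⟨d⟩ =>
      ⟨harrop_slash h₁ ⟨d.andE₀⟩, harrop_slash h₂ ⟨d.andE₁⟩⟩
  | .imp _ _, hβ, h => by
      refine ⟨h, fun hα => ?_⟩
      obtain ⟨d⟩ := h
      obtain ⟨e⟩ := slash_derivable hα
      exact harrop_slash hβ ⟨d.impE e⟩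

/-- Disjunction property with Harrop antecedents. -/
theorem dp_harrop (Γ : Cedent) (hΓ : ∀ γ ∈ Γ, Harrop γ) (α₀ α₁ : Fml)
    (h : Derivable Γ (Fml.or α₀ α₁)) :
    Derivable Γ α₀ ∨ Derivable Γ α₁ := by
  have hs : Slash Γ (Fml.or α₀ α₁) := by
    obtain ⟨d⟩ := h
    exact slash_sound d (fun δ hδ => harrop_slash (hΓ _ hδ) ⟨.ax hδ⟩)
  rcases hs with h | h
  · exact .inl (slash_derivable h)
  · exact .inr (slash_derivable h)
end

section
/- With notation as in the Turing-machine encoding, the machine M accepts input x if and only if Γ(x,ℓ) ⇒ P((s_a,B),1,ℓ) is intuitionistically derivable, where s_a is the accepting state and ℓ the time bound. -/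
section TuringMachine

variable {Sym : Type} [Fintype Sym] [DecidableEq Sym]

/-- The atom `P(a,i,t)`: symbol `a` is the `i`-th symbol of the `t`-th configuration. -/
def Patom (enc : Sym → ℕ → ℕ → ℕ) (a : Sym) (i t : ℕ) : Fml := Fml.var (enc a i t)

/-- The computation of the machine: `config f B ℓ init t i` is the `i`-th symbol of the
`t`-th configuration, determined from the initial configuration `init` by the local
transition function `f` on triples of neighbouring symbols, with blanks `B` kept at
position `0` and at positions beyond `ℓ`. -/
def config (f : Sym → Sym → Sym → Sym) (B : Sym) (ℓ : ℕ) (init : ℕ → Sym) : ℕ → ℕ → Sym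
  | 0, i => init i
  | t + 1, i =>
      if i = 0 ∨ ℓ + 1 ≤ i then B
      else f (config f B ℓ init t (i - 1)) (config f B ℓ init t i)
        (config f B ℓ init t (i + 1))

/-- The boundary axioms `β`: positions `0` and `ℓ+1` are blank at every time `t ≤ ℓ`. -/
def betaTM (enc : Sym → ℕ → ℕ → ℕ) (B : Sym) (ℓ : ℕ) : Finset Fml :=
  (Finset.range (ℓ + 1)).image (fun s => Patom enc B 0 s) ∪
    (Finset.range (ℓ + 1)).image (fun s => Patom enc B (ℓ + 1) s)

/-- The initial-configuration formula `δ₀(x)`. -/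
def delta0TM (enc : Sym → ℕ → ℕ → ℕ) (init : ℕ → Sym) (ℓ : ℕ) : Finset Fml :=
  (Finset.Icc 1 ℓ).image fun i => Patom enc (init i) i 0

/-- The transition Horn formulas `δ_{s+1}`:
`P(a,i−1,s) ∧ P(b,i,s) ∧ P(c,i+1,s) ⊃ P(f(a,b,c),i,s+1)` for `1 ≤ i ≤ ℓ`. -/
def deltaTM (enc : Sym → ℕ → ℕ → ℕ) (f : Sym → Sym → Sym → Sym) (ℓ s : ℕ) : Finset Fml :=
  (Finset.univ ×ˢ (Finset.univ ×ˢ (Finset.univ ×ˢ Finset.Icc 1 ℓ))).image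
    fun p : Sym × Sym × Sym × ℕ =>
      Fml.imp
        (Fml.and (Patom enc p.1 (p.2.2.2 - 1) s)
          (Fml.and (Patom enc p.2.1 p.2.2.2 s) (Patom enc p.2.2.1 (p.2.2.2 + 1) s)))
        (Patom enc (f p.1 p.2.1 p.2.2.1) p.2.2.2 (s + 1))

/-- The cedent `Γ(x,t)`: boundary axioms, initial configuration, and the transition
formulas `δ₁, …, δ_t`. -/
def GammaTM (enc : Sym → ℕ → ℕ → ℕ) (f : Sym → Sym → Sym → Sym) (B : Sym) (ℓ : ℕ)
    (init : ℕ → Sym) (t : ℕ) : Finset Fml :=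
  betaTM enc B ℓ ∪ delta0TM enc init ℓ ∪ (Finset.range t).biUnion (deltaTM enc f ℓ)

end TuringMachine

/-! Read `P(a,i,t)` classically as "the run has `a` at position `i` at time `t`". This valuation
satisfies every formula of `Γ(x,t)`, so by soundness of NJ a derivable atom is true of the run;
injectivity of the encoding lets the atom be read back. Conversely, every true atom
`P(config t i, i, t)` with `t ≤ ℓ` is derivable by induction on `t`: boundary and initial atoms
are members of `Γ`, and an interior atom at time `t + 1` follows from its three neighbours at
time `t` by one transition Horn formula. -/

def Fml.eval (v : ℕ → Prop) : Fml → Prop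
  | .var n => v n
  | .bot => False
  | .and α β => α.eval v ∧ β.eval v
  | .or α β => α.eval v ∨ β.eval v
  | .imp α β => α.eval v → β.eval v

theorem NJ.eval {Γ : Cedent} {α : Fml} (d : NJ Γ α) (v : ℕ → Prop)
    (hΓ : ∀ γ ∈ Γ, γ.eval v) : α.eval v := by
  induction d with
  | ax hα => exact hΓ _ hα
  | botE hbot => exact (hΓ _ hbot).elim
  | andI _ _ ih₁ ih₂ => exact ⟨ih₁ hΓ, ih₂ hΓ⟩
  | andE₀ _ ih => exact (ih hΓ).1
  | andE₁ _ ih => exact (ih hΓ).2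
  | orI₀ _ ih => exact Or.inl (ih hΓ)
  | orI₁ _ ih => exact Or.inr (ih hΓ)
  | orE _ _ _ ih ih₁ ih₂ =>
      rcases ih hΓ with hα | hβ
      · exact ih₁ ((Finset.forall_mem_insert _ _ _).2 ⟨hα, hΓ⟩)
      · exact ih₂ ((Finset.forall_mem_insert _ _ _).2 ⟨hβ, hΓ⟩)
  | impI _ ih => exact fun hα => ih ((Finset.forall_mem_insert _ _ _).2 ⟨hα, hΓ⟩)
  | impE _ _ ih₁ ih₂ => exact ih₁ hΓ (ih₂ hΓ)

theorem Derivable.eval {Γ : Cedent} {α : Fml} (h : Derivable Γ α) (v : ℕ → Prop)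
    (hΓ : ∀ γ ∈ Γ, γ.eval v) : α.eval v :=
  h.elim fun d => d.eval v hΓ

section TuringMachine

variable {Sym : Type}
  (enc : Sym → ℕ → ℕ → ℕ) (f : Sym → Sym → Sym → Sym) (B : Sym) (ℓ : ℕ) (init : ℕ → Sym)

theorem config_succ_of_mem_Icc {t i : ℕ} (hi : i ∈ Finset.Icc 1 ℓ) :
    config f B ℓ init (t + 1) i =
      f (config f B ℓ init t (i - 1)) (config f B ℓ init t i) (config f B ℓ init t (i + 1)) := by
  rw [Finset.mem_Icc] at hi
  rw [config, if_neg (by omega)]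

theorem config_of_boundary (hinit0 : init 0 = B) (hinit1 : ∀ i, ℓ + 1 ≤ i → init i = B)
    {t i : ℕ} (hi : i = 0 ∨ i = ℓ + 1) : config f B ℓ init t i = B := by
  cases t with
  | zero => rcases hi with rfl | rfl; exacts [hinit0, hinit1 _ le_rfl]
  | succ t => rw [config, if_pos (by omega)]

def runValuation (n : ℕ) : Prop :=
  ∃ a i t, enc a i t = n ∧ config f B ℓ init t i = a

variable {enc}

theorem eval_patom_runValuation
    (henc : Function.Injective fun p : Sym × ℕ × ℕ => enc p.1 p.2.1 p.2.2)
    {a : Sym} {i t : ℕ} :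
    (Patom enc a i t).eval (runValuation enc f B ℓ init) ↔ config f B ℓ init t i = a := by
  constructor
  · rintro ⟨a', i', t', henc', hrun⟩
    obtain ⟨rfl, rfl, rfl⟩ := Prod.mk.injEq _ _ _ _ ▸ @henc (a', i', t') (a, i, t) henc'
    exact hrun
  · exact fun hrun => ⟨a, i, t, rfl, hrun⟩

variable {f B ℓ init}

theorem patom_mem_betaTM {s i : ℕ} (hs : s ≤ ℓ) (hi : i = 0 ∨ i = ℓ + 1) :
    Patom enc B i s ∈ betaTM enc B ℓ := by
  have hs' : s ∈ Finset.range (ℓ + 1) := Finset.mem_range.2 (Nat.lt_succ_of_le hs)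
  rcases hi with rfl | rfl
  · exact Finset.mem_union_left _ (Finset.mem_image_of_mem _ hs')
  · exact Finset.mem_union_right _ (Finset.mem_image_of_mem _ hs')

theorem patom_mem_delta0TM {i : ℕ} (hi : i ∈ Finset.Icc 1 ℓ) :
    Patom enc (init i) i 0 ∈ delta0TM enc init ℓ :=
  Finset.mem_image_of_mem _ hi

variable [Fintype Sym]

theorem transition_mem_deltaTM {s i : ℕ} (hi : i ∈ Finset.Icc 1 ℓ) (a b c : Sym) :
    Fml.imp (Fml.and (Patom enc a (i - 1) s) (Fml.and (Patom enc b i s) (Patom enc c (i + 1) s)))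
      (Patom enc (f a b c) i (s + 1)) ∈ deltaTM enc f ℓ s :=
  Finset.mem_image.2 ⟨(a, b, c, i), by simpa using hi, rfl⟩

theorem betaTM_subset_GammaTM (t : ℕ) : betaTM enc B ℓ ⊆ GammaTM enc f B ℓ init t :=
  Finset.subset_union_left.trans Finset.subset_union_left

theorem delta0TM_subset_GammaTM (t : ℕ) : delta0TM enc init ℓ ⊆ GammaTM enc f B ℓ init t :=
  Finset.subset_union_right.trans Finset.subset_union_left

theorem deltaTM_subset_GammaTM {s t : ℕ} (hs : s < t) :
    deltaTM enc f ℓ s ⊆ GammaTM enc f B ℓ init t :=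
  (Finset.subset_biUnion_of_mem _ (Finset.mem_range.2 hs)).trans Finset.subset_union_right

theorem derivable_config (hinit0 : init 0 = B) (hinit1 : ∀ i, ℓ + 1 ≤ i → init i = B)
    {t i : ℕ} (ht : t ≤ ℓ) (hi : i ≤ ℓ + 1) :
    Derivable (GammaTM enc f B ℓ init ℓ) (Patom enc (config f B ℓ init t i) i t) := by
  induction t generalizing i with
  | zero => ?_
  | succ t ih => ?_
  all_goals
    by_cases hbd : i = 0 ∨ i = ℓ + 1
    · rw [config_of_boundary f B ℓ init hinit0 hinit1 hbd]
      exact ⟨.ax (betaTM_subset_GammaTM ℓ (patom_mem_betaTM ht hbd))⟩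
    have hi' : i ∈ Finset.Icc 1 ℓ := Finset.mem_Icc.2 (by omega)
  · exact ⟨.ax (delta0TM_subset_GammaTM ℓ (patom_mem_delta0TM hi'))⟩
  · set c := config f B ℓ init t
    rw [config_succ_of_mem_Icc f B ℓ init hi']
    obtain ⟨dl⟩ := ih (by omega) (i := i - 1) (by omega)
    obtain ⟨dc⟩ := ih (by omega) (i := i) hi
    obtain ⟨dr⟩ := ih (by omega) (i := i + 1) (by omega)
    have hstep := deltaTM_subset_GammaTM (init := init) (B := B) (by omega : t < ℓ)
      (transition_mem_deltaTM (enc := enc) (f := f) hi' (c (i - 1)) (c i) (c (i + 1)))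
    exact ⟨.impE (.ax hstep) (.andI dl (.andI dc dr))⟩

theorem runValuation_models_GammaTM
    (henc : Function.Injective fun p : Sym × ℕ × ℕ => enc p.1 p.2.1 p.2.2)
    (hinit0 : init 0 = B) (hinit1 : ∀ i, ℓ + 1 ≤ i → init i = B) (t : ℕ) :
    ∀ γ ∈ GammaTM enc f B ℓ init t, γ.eval (runValuation enc f B ℓ init) := by
  intro γ hγ
  simp only [GammaTM, betaTM, delta0TM, deltaTM, Finset.mem_union, Finset.mem_biUnion,
    Finset.mem_image] at hγ
  rcases hγ with ((⟨s, -, rfl⟩ | ⟨s, -, rfl⟩) | ⟨i, -, rfl⟩) | ⟨s, -, ⟨a, b, c, i⟩, hmem, rfl⟩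
  · exact (eval_patom_runValuation f B ℓ init henc).2
      (config_of_boundary f B ℓ init hinit0 hinit1 (Or.inl rfl))
  · exact (eval_patom_runValuation f B ℓ init henc).2
      (config_of_boundary f B ℓ init hinit0 hinit1 (Or.inr rfl))
  · exact (eval_patom_runValuation f B ℓ init henc).2 rfl
  · simp only [Fml.eval, eval_patom_runValuation f B ℓ init henc]
    rintro ⟨rfl, rfl, rfl⟩
    exact config_succ_of_mem_Icc f B ℓ init (by simpa using hmem)

end TuringMachine

theorem tm_accepts_iff_derivable_general {Sym : Type} [Fintype Sym]
    (enc : Sym → ℕ → ℕ → ℕ)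
    (henc : Function.Injective fun p : Sym × ℕ × ℕ => enc p.1 p.2.1 p.2.2)
    (f : Sym → Sym → Sym → Sym) (B : Sym) (ℓ : ℕ) (init : ℕ → Sym)
    (hinit0 : init 0 = B) (hinit1 : ∀ i, ℓ + 1 ≤ i → init i = B)
    (sa : Sym) :
    config f B ℓ init ℓ 1 = sa ↔
      Derivable (GammaTM enc f B ℓ init ℓ) (Patom enc sa 1 ℓ) := by
  constructor
  · rintro rfl
    exact derivable_config hinit0 hinit1 le_rfl (by omega)
  · intro h
    exact (eval_patom_runValuation f B ℓ init henc).1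
      (h.eval _ (runValuation_models_GammaTM henc hinit0 hinit1 ℓ))

/-- The machine accepts its input (i.e. at time `ℓ` the symbol at position `1` is the
accepting state–symbol pair `sa = (s_a, B)`) iff `Γ(x,ℓ) ⇒ P((s_a,B),1,ℓ)` is
intuitionistically derivable. -/
theorem tm_accepts_iff_derivable {Sym : Type} [Fintype Sym] [DecidableEq Sym]
    (enc : Sym → ℕ → ℕ → ℕ)
    (henc : Function.Injective fun p : Sym × ℕ × ℕ => enc p.1 p.2.1 p.2.2)
    (f : Sym → Sym → Sym → Sym) (B : Sym) (ℓ : ℕ) (init : ℕ → Sym)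
    (hinit0 : init 0 = B) (hinit1 : ∀ i, ℓ + 1 ≤ i → init i = B)
    (sa : Sym) :
    config f B ℓ init ℓ 1 = sa ↔
      Derivable (GammaTM enc f B ℓ init ℓ) (Patom enc sa 1 ℓ) :=
  tm_accepts_iff_derivable_general enc henc f B ℓ init hinit0 hinit1 sa
end
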